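/- Let X be a random variable (continuous or discrete), Y a random variable with finite outcome set 𝒴, and let T be a discrete random variable satisfying the Markov condition Y − X − T with H(T) = r. Then for every r' ≥ r there exists a discrete random variable T' satisfying the Markov condition Y − X − T' with H(T') = r' and I(Y;T') = I(Y;T). Consequently the deterministic-IB curve F_dIB(r) := sup{ I(Y;T) : Y − X − T Markov, T discrete, H(T) ≤ r } is monotonically nondecreasing in r, and the inequality constraint H(T) ≤ r may be replaced by the equality constraint H(T) = r without changing F_dIB. -/

import Mathlib

noncomputable section

/-- `p` is a joint probability distribution on the finite product `A × B`. -/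
def IsJoint {A B : Type*} [Fintype A] [Fintype B] (p : A → B → ℝ) : Prop :=
  (∀ a b, 0 ≤ p a b) ∧ (∑ a, ∑ b, p a b) = 1

/-- `κ` is a channel (conditional distribution) from `A` to the finite type `B`. -/
def IsChannel {A B : Type*} [Fintype B] (κ : A → B → ℝ) : Prop :=
  ∀ a, (∀ b, 0 ≤ κ a b) ∧ (∑ b, κ a b) = 1

/-- Marginal distribution of the first coordinate. -/
def margFst {A B : Type*} [Fintype B] (p : A → B → ℝ) : A → ℝ := fun a => ∑ b, p a b

/-- Marginal distribution of the second coordinate. -/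
def margSnd {A B : Type*} [Fintype A] (p : A → B → ℝ) : B → ℝ := fun b => ∑ a, p a b

/-- ℓ1 distance between two joint distributions. -/
def l1 {A B : Type*} [Fintype A] [Fintype B] (p q : A → B → ℝ) : ℝ :=
  ∑ a, ∑ b, |p a b - q a b|

/-- Shannon entropy of a distribution on a finite type. -/
def ent {A : Type*} [Fintype A] (q : A → ℝ) : ℝ := -∑ a, q a * Real.log (q a)

/-- Conditional entropy `H(B | A)` of the second coordinate given the first. -/
def condEnt {A B : Type*} [Fintype A] [Fintype B] (p : A → B → ℝ) : ℝ :=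
  -∑ a, ∑ b, p a b * Real.log (p a b / margFst p a)

/-- Mutual information `I(A;B)` of a joint distribution, as `H(B) - H(B|A)`. -/
def mi {A B : Type*} [Fintype A] [Fintype B] (p : A → B → ℝ) : ℝ :=
  ent (margSnd p) - condEnt p

/-- Joint distribution of `(X,T)` when `T` is generated from `X` via channel `κ`
(so that the Markov condition `Y - X - T` holds). -/
def jointXT {X Y T : Type*} [Fintype Y] (p : X → Y → ℝ) (κ : X → T → ℝ) : X → T → ℝ :=
  fun x t => (∑ y, p x y) * κ x t

/-- Joint distribution of `(T,Y)` when `T` is generated from `X` via channel `κ`. -/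
def jointTY {X Y T : Type*} [Fintype X] (p : X → Y → ℝ) (κ : X → T → ℝ) : T → Y → ℝ :=
  fun t y => ∑ x, p x y * κ x t

/-- Joint distribution of `(Y,T)` when `T` is generated from `X` via channel `κ`. -/
def jointYT {X Y T : Type*} [Fintype X] (p : X → Y → ℝ) (κ : X → T → ℝ) : Y → T → ℝ :=
  fun y t => ∑ x, p x y * κ x t

/-- The information-bottleneck curve `F(r)`: the supremum of `I(Y;T)` over all (discrete)
bottleneck variables `T` obeying the Markov condition `Y - X - T` with `I(X;T) ≤ r`. -/
def IBcurve {X Y : Type*} [Fintype X] [Fintype Y] (p : X → Y → ℝ) (r : ℝ) : ℝ :=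
  sSup { v : ℝ | ∃ (n : ℕ) (κ : X → Fin n → ℝ), IsChannel κ ∧
    mi (jointXT p κ) ≤ r ∧ v = mi (jointTY p κ) }

/-- `Y` is the deterministic function `f` of `X` under the joint distribution `p`:
given `X = x`, all conditional mass is on `f x`. -/
def Determ {X Y : Type*} (p : X → Y → ℝ) (f : X → Y) : Prop :=
  ∀ x y, y ≠ f x → p x y = 0

/-- The deterministic-IB curve: supremum of `I(Y;T)` over (discrete) bottleneck variables
`T` obeying `Y - X - T` with `H(T) ≤ r`. -/
def FdIB {X Y : Type*} [Fintype X] [Fintype Y] (p : X → Y → ℝ) (r : ℝ) : ℝ :=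
  sSup { v : ℝ | ∃ (n : ℕ) (κ : X → Fin n → ℝ), IsChannel κ ∧
    ent (margSnd (jointXT p κ)) ≤ r ∧ v = mi (jointYT p κ) }

/-- The deterministic-IB curve with the equality constraint `H(T) = r`. -/
def FdIBeq {X Y : Type*} [Fintype X] [Fintype Y] (p : X → Y → ℝ) (r : ℝ) : ℝ :=
  sSup { v : ℝ | ∃ (n : ℕ) (κ : X → Fin n → ℝ), IsChannel κ ∧
    ent (margSnd (jointXT p κ)) = r ∧ v = mi (jointYT p κ) }

/-!
Append to the bottleneck variable `T` an independent noise `U` with distribution `q`,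
i.e. pass to the channel `x ↦ κ x t * q u` into `T × U`. Then `H(T, U) = H(T) + H(U)` while
`I(Y; T, U) = I(Y; T)`, since `U` is independent of `(Y, T)`. As `q` ranges over the (connected)
simplex on `m` points, `H(U)` takes every value between `0` (a vertex) and `log m` (the
barycenter), so `H(T, U)` can be made equal to any `r' ≥ H(T)`. In particular the feasible
values of `I(Y;T)` under `H(T) ≤ r` and under `H(T) = r` are the same set, and `F_dIB` is
monotone because these sets grow with `r`, are bounded by `r` (as `I(Y;T) ≤ H(T)`), and
contain `0` (a constant `T`) as soon as `r ≥ 0`; for `r < 0` they are empty and `sSup ∅ = 0`.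
-/

open Finset Real

section Entropy

variable {A B B' U : Type*} [Fintype A] [Fintype B] [Fintype B'] [Fintype U]

lemma ent_eq_sum_negMulLog (q : A → ℝ) : ent q = ∑ a, negMulLog (q a) := by
  simp [ent, negMulLog_eq_neg]

lemma ent_nonneg {q : A → ℝ} (hq : q ∈ stdSimplex ℝ A) : 0 ≤ ent q := by
  rw [ent_eq_sum_negMulLog]
  exact sum_nonneg fun a _ => negMulLog_nonneg (hq.1 a) (mem_Icc_of_mem_stdSimplex hq a).2

lemma continuous_ent : Continuous (ent : (A → ℝ) → ℝ) := by
  simp_rw [funext ent_eq_sum_negMulLog]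
  fun_prop

lemma ent_comp_equiv (e : B ≃ A) (q : A → ℝ) : ent (q ∘ e) = ent q := by
  simp only [ent_eq_sum_negMulLog, Function.comp_apply, e.sum_comp (fun a => negMulLog (q a))]

lemma ent_of_subsingleton [Subsingleton A] {q : A → ℝ} (hq : ∑ a, q a = 1) : ent q = 0 := by
  have hq_one : ∀ a, q a = 1 := fun a => (Fintype.sum_subsingleton q a).symm.trans hq
  simp [ent_eq_sum_negMulLog, hq_one]

lemma ent_mul {f : A → ℝ} {g : B → ℝ} (hf : ∑ a, f a = 1) (hg : ∑ b, g b = 1) :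
    ent (fun ab : A × B => f ab.1 * g ab.2) = ent f + ent g := by
  simp only [ent_eq_sum_negMulLog, negMulLog_mul, Fintype.sum_prod_type, sum_add_distrib,
    ← mul_sum, ← sum_mul, hf, hg, one_mul]

lemma exists_mem_stdSimplex_ent_eq [Nonempty A] {d : ℝ} (hd₀ : 0 ≤ d)
    (hd : d ≤ Real.log (Fintype.card A)) : ∃ q ∈ stdSimplex ℝ A, ent q = d := by
  classical
  let a := Classical.arbitrary A
  have h_vertex : ent (Pi.single a 1 : A → ℝ) = 0 := by
    simp [ent_eq_sum_negMulLog, Pi.single_apply, apply_ite negMulLog]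
  have h_barycenter : ent (stdSimplex.barycenter : stdSimplex ℝ A).val
      = Real.log (Fintype.card A) := by
    simp [ent, Real.log_inv]
  exact (isPathConnected_stdSimplex A).isConnected.isPreconnected.intermediate_value
    (single_mem_stdSimplex ℝ a) stdSimplex.barycenter.2 continuous_ent.continuousOn
    ⟨h_vertex ▸ hd₀, h_barycenter ▸ hd⟩

lemma exists_ent_eq {d : ℝ} (hd : 0 ≤ d) :
    ∃ (m : ℕ) (q : Fin m → ℝ), q ∈ stdSimplex ℝ (Fin m) ∧ ent q = d := by
  refine ⟨_, exists_mem_stdSimplex_ent_eq (A := Fin (⌈Real.exp d⌉₊ + 1)) hd ?_⟩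
  rw [Fintype.card_fin, Real.le_log_iff_exp_le (by positivity)]
  push_cast
  linarith [Nat.le_ceil (Real.exp d)]

lemma IsJoint.margSnd_mem_stdSimplex {J : A → B → ℝ} (hJ : IsJoint J) :
    margSnd J ∈ stdSimplex ℝ B :=
  ⟨fun b => sum_nonneg fun a _ => hJ.1 a b, by rw [← hJ.2]; exact sum_comm⟩

lemma condEnt_nonneg {J : A → B → ℝ} (hJ : ∀ a b, 0 ≤ J a b) : 0 ≤ condEnt J := by
  rw [condEnt, neg_nonneg]
  refine sum_nonpos fun a _ => sum_nonpos fun b _ => ?_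
  have hJM : J a b ≤ margFst J a := single_le_sum (fun b _ => hJ a b) (mem_univ b)
  exact mul_nonpos_of_nonneg_of_nonpos (hJ a b) (Real.log_nonpos
    (div_nonneg (hJ a b) ((hJ a b).trans hJM)) (div_le_one_of_le₀ hJM ((hJ a b).trans hJM)))

lemma mi_le_ent_margSnd {J : A → B → ℝ} (hJ : ∀ a b, 0 ≤ J a b) :
    mi J ≤ ent (margSnd J) :=
  sub_le_self _ (condEnt_nonneg hJ)

lemma condEnt_eq_ent_sub_ent {J : A → B → ℝ} (hJ : ∀ a b, 0 ≤ J a b) :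
    condEnt J = ent (Function.uncurry J) - ent (margFst J) := by
  have h_term : ∀ a b, J a b * Real.log (J a b / margFst J a)
      = J a b * Real.log (J a b) - J a b * Real.log (margFst J a) := by
    intro a b
    rcases (hJ a b).eq_or_lt with h | h
    · simp [← h]
    have hM : 0 < margFst J a := h.trans_le (single_le_sum (fun b _ => hJ a b) (mem_univ b))
    rw [Real.log_div h.ne' hM.ne', mul_sub]
  have h_margFst : ∀ a, margFst J a * Real.log (margFst J a)
      = ∑ b, J a b * Real.log (margFst J a) := fun a => sum_mul _ _ _
  simp only [condEnt, ent, h_term, h_margFst, Fintype.sum_prod_type, Function.uncurry_apply_pair,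
    sum_sub_distrib]
  ring

lemma mi_eq_ent_add_ent_sub_ent {J : A → B → ℝ} (hJ : ∀ a b, 0 ≤ J a b) :
    mi J = ent (margFst J) + ent (margSnd J) - ent (Function.uncurry J) := by
  rw [mi, condEnt_eq_ent_sub_ent hJ]
  ring

lemma mi_of_subsingleton [Subsingleton B] {J : A → B → ℝ} (hJ : ∑ a, ∑ b, J a b = 1) :
    mi J = 0 := by
  have h_condEnt : condEnt J = 0 := by
    refine neg_eq_zero.2 (sum_eq_zero fun a _ => sum_eq_zero fun b _ => ?_)
    rw [margFst, Fintype.sum_subsingleton _ b]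
    rcases eq_or_ne (J a b) 0 with h | h <;> simp [h]
  rw [mi, h_condEnt, ent_of_subsingleton (q := margSnd J) (sum_comm.trans hJ), sub_zero]

lemma mi_comp_equiv (e : B' ≃ B) (J : A → B → ℝ) : mi (fun a b' => J a (e b')) = mi J := by
  have h_margFst : margFst (fun a b' => J a (e b')) = margFst J :=
    funext fun a => e.sum_comp (J a)
  simp only [mi, condEnt, h_margFst]
  rw [show margSnd (fun a b' => J a (e b')) = margSnd J ∘ e from rfl, ent_comp_equiv]
  exact congrArg (_ - -·) (sum_congr rfl fun a _ =>
    e.sum_comp fun b => J a b * Real.log (J a b / margFst J a))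

lemma mi_mul_right {J : A → B → ℝ} (hJ : IsJoint J) {q : U → ℝ}
    (hq : q ∈ stdSimplex ℝ U) :
    mi (fun a (bu : B × U) => J a bu.1 * q bu.2) = mi J := by
  have h_margFst : margFst (fun a (bu : B × U) => J a bu.1 * q bu.2) = margFst J := by
    funext a
    simp [margFst, Fintype.sum_prod_type, ← mul_sum, hq.2]
  have h_margSnd : margSnd (fun a (bu : B × U) => J a bu.1 * q bu.2)
      = fun bu => margSnd J bu.1 * q bu.2 := by
    funext bu
    simp [margSnd, sum_mul]
  have h_uncurry : Function.uncurry (fun a (bu : B × U) => J a bu.1 * q bu.2)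
      = (fun abu : (A × B) × U => Function.uncurry J abu.1 * q abu.2)
        ∘ (Equiv.prodAssoc A B U).symm := rfl
  have h_sum : ∑ ab, Function.uncurry J ab = 1 := by
    rw [Fintype.sum_prod_type]; exact hJ.2
  have h_nonneg : ∀ a (bu : B × U), 0 ≤ J a bu.1 * q bu.2 := fun a bu =>
    mul_nonneg (hJ.1 a bu.1) (hq.1 bu.2)
  rw [mi_eq_ent_add_ent_sub_ent h_nonneg,
    mi_eq_ent_add_ent_sub_ent hJ.1, h_margFst, h_margSnd, h_uncurry, ent_comp_equiv,
    ent_mul hJ.margSnd_mem_stdSimplex.2 hq.2, ent_mul h_sum hq.2]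
  ring

end Entropy

section Channel

variable {X T T' U : Type*} {κ : X → T → ℝ} {q : U → ℝ}

lemma isChannel_comp_equiv [Fintype T] [Fintype T'] (hκ : IsChannel κ)
    (e : T' ≃ T) : IsChannel fun x t' => κ x (e t') :=
  fun x => ⟨fun t' => (hκ x).1 (e t'), (e.sum_comp (κ x)).trans (hκ x).2⟩

def withNoise (κ : X → T → ℝ) (q : U → ℝ) : X → T × U → ℝ :=
  fun x tu => κ x tu.1 * q tu.2

lemma isChannel_withNoise [Fintype T] [Fintype U] (hκ : IsChannel κ)
    (hq : q ∈ stdSimplex ℝ U) :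
    IsChannel (withNoise κ q) := fun x =>
  ⟨fun tu => mul_nonneg ((hκ x).1 tu.1) (hq.1 tu.2),
    by simp [withNoise, Fintype.sum_prod_type, ← mul_sum, hq.2, (hκ x).2]⟩

end Channel

section Joint

variable {X Y T : Type*} [Fintype X] [Fintype Y] {p : X → Y → ℝ} {κ : X → T → ℝ}

lemma margSnd_jointYT : margSnd (jointYT p κ) = margSnd (jointXT p κ) := by
  funext t
  simp only [margSnd, jointYT, jointXT, sum_mul]
  exact sum_comm

lemma isJoint_jointYT [Fintype T] (hp : IsJoint p) (hκ : IsChannel κ) :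
    IsJoint (jointYT p κ) := by
  refine ⟨fun y t => sum_nonneg fun x _ => mul_nonneg (hp.1 x y) ((hκ x).1 t), ?_⟩
  have h_row : ∀ y, ∑ t, jointYT p κ y t = ∑ x, p x y := fun y => by
    simp only [jointYT]
    rw [sum_comm]
    simp [← mul_sum, (hκ _).2]
  simp only [h_row]
  rw [sum_comm]
  exact hp.2

lemma exists_fin_channel [Fintype T] (hκ : IsChannel κ) :
    ∃ (n : ℕ) (κ' : X → Fin n → ℝ), IsChannel κ' ∧
      ent (margSnd (jointXT p κ')) = ent (margSnd (jointXT p κ)) ∧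
      mi (jointYT p κ') = mi (jointYT p κ) :=
  let e := (Fintype.equivFin T).symm
  ⟨_, _, isChannel_comp_equiv hκ e, ent_comp_equiv e (margSnd (jointXT p κ)),
    mi_comp_equiv e (jointYT p κ)⟩

lemma margSnd_jointXT_mem_stdSimplex [Fintype T] (hp : IsJoint p) (hκ : IsChannel κ) :
    margSnd (jointXT p κ) ∈ stdSimplex ℝ T :=
  margSnd_jointYT (p := p) ▸ (isJoint_jointYT hp hκ).margSnd_mem_stdSimplex

variable {U : Type*} [Fintype T] [Fintype U] {q : U → ℝ}

lemma ent_margSnd_jointXT_withNoise (hp : IsJoint p) (hκ : IsChannel κ)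
    (hq : q ∈ stdSimplex ℝ U) :
    ent (margSnd (jointXT p (withNoise κ q))) = ent (margSnd (jointXT p κ)) + ent q := by
  have h_margSnd : margSnd (jointXT p (withNoise κ q))
      = fun tu => margSnd (jointXT p κ) tu.1 * q tu.2 := by
    funext tu
    simp [margSnd, jointXT, withNoise, sum_mul, mul_assoc]
  rw [h_margSnd, ent_mul (margSnd_jointXT_mem_stdSimplex hp hκ).2 hq.2]

lemma mi_jointYT_withNoise (hp : IsJoint p) (hκ : IsChannel κ) (hq : q ∈ stdSimplex ℝ U) :
    mi (jointYT p (withNoise κ q)) = mi (jointYT p κ) := by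
  have h_joint : jointYT p (withNoise κ q) = fun y tu => jointYT p κ y tu.1 * q tu.2 := by
    funext y tu
    simp [jointYT, withNoise, sum_mul, mul_assoc]
  rw [h_joint, mi_mul_right (isJoint_jointYT hp hκ) hq]

lemma exists_channel_ent_eq_mi_eq (hp : IsJoint p) (hκ : IsChannel κ) {r : ℝ}
    (hr : ent (margSnd (jointXT p κ)) ≤ r) :
    ∃ (n : ℕ) (κ' : X → Fin n → ℝ), IsChannel κ' ∧
      ent (margSnd (jointXT p κ')) = r ∧ mi (jointYT p κ') = mi (jointYT p κ) := by
  obtain ⟨m, q, hq, hq_ent⟩ := exists_ent_eq (sub_nonneg.2 hr)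
  obtain ⟨n, κ', hκ', h_ent, h_mi⟩ := exists_fin_channel (p := p) (isChannel_withNoise hκ hq)
  refine ⟨n, κ', hκ', ?_, ?_⟩
  · rw [h_ent, ent_margSnd_jointXT_withNoise hp hκ hq, hq_ent, add_sub_cancel]
  · rw [h_mi, mi_jointYT_withNoise hp hκ hq]

end Joint

section Curve

variable {X Y : Type*} [Fintype X] [Fintype Y] {p : X → Y → ℝ}

def dIBValues (p : X → Y → ℝ) (c : ℝ → Prop) : Set ℝ :=
  {v | ∃ (n : ℕ) (κ : X → Fin n → ℝ), IsChannel κ ∧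
    c (ent (margSnd (jointXT p κ))) ∧ v = mi (jointYT p κ)}

lemma FdIB_eq_sSup (r : ℝ) : FdIB p r = sSup (dIBValues p (· ≤ r)) := rfl

lemma FdIBeq_eq_sSup (r : ℝ) : FdIBeq p r = sSup (dIBValues p (· = r)) := rfl

lemma dIBValues_le_eq_dIBValues_eq (hp : IsJoint p) (r : ℝ) :
    dIBValues p (· ≤ r) = dIBValues p (· = r) := by
  ext v
  constructor
  · rintro ⟨n, κ, hκ, h_le, rfl⟩
    obtain ⟨n', κ', hκ', h_ent, h_mi⟩ := exists_channel_ent_eq_mi_eq hp hκ h_le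
    exact ⟨n', κ', hκ', h_ent, h_mi.symm⟩
  · rintro ⟨n, κ, hκ, h_eq, rfl⟩
    exact ⟨n, κ, hκ, h_eq.le, rfl⟩

lemma dIBValues_le_mono {r₁ r₂ : ℝ} (h : r₁ ≤ r₂) :
    dIBValues p (· ≤ r₁) ⊆ dIBValues p (· ≤ r₂) :=
  fun _ ⟨n, κ, hκ, h_le, hv⟩ => ⟨n, κ, hκ, h_le.trans h, hv⟩

lemma dIBValues_le_subset_Iic (hp : IsJoint p) (r : ℝ) :
    dIBValues p (· ≤ r) ⊆ Set.Iic r := by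
  rintro _ ⟨n, κ, hκ, h_le, rfl⟩
  have h_mi := mi_le_ent_margSnd (isJoint_jointYT hp hκ).1
  rw [margSnd_jointYT] at h_mi
  exact h_mi.trans h_le

lemma zero_mem_dIBValues_le (hp : IsJoint p) {r : ℝ} (hr : 0 ≤ r) :
    0 ∈ dIBValues p (· ≤ r) := by
  have hκ : IsChannel fun (_ : X) (_ : Fin 1) => (1 : ℝ) :=
    fun _ => ⟨fun _ => zero_le_one, by simp⟩
  refine ⟨1, _, hκ, ?_, (mi_of_subsingleton (isJoint_jointYT hp hκ).2).symm⟩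
  rw [ent_of_subsingleton (margSnd_jointXT_mem_stdSimplex hp hκ).2]
  exact hr

lemma dIBValues_le_eq_empty (hp : IsJoint p) {r : ℝ} (hr : r < 0) :
    dIBValues p (· ≤ r) = ∅ := by
  refine Set.eq_empty_of_forall_notMem ?_
  rintro _ ⟨n, κ, hκ, h_le, -⟩
  linarith [ent_nonneg (margSnd_jointXT_mem_stdSimplex hp hκ)]

lemma FdIB_nonneg (hp : IsJoint p) (r : ℝ) : 0 ≤ FdIB p r := by
  rw [FdIB_eq_sSup]
  rcases le_or_gt 0 r with hr | hr
  · exact le_csSup ⟨r, dIBValues_le_subset_Iic hp r⟩ (zero_mem_dIBValues_le hp hr)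
  · rw [dIBValues_le_eq_empty hp hr, Real.sSup_empty]

lemma FdIB_mono (hp : IsJoint p) : Monotone (FdIB p) := by
  intro r₁ r₂ h
  rcases le_or_gt 0 r₁ with hr₁ | hr₁
  · exact csSup_le_csSup ⟨r₂, dIBValues_le_subset_Iic hp r₂⟩
      ⟨0, zero_mem_dIBValues_le hp hr₁⟩ (dIBValues_le_mono h)
  · rw [FdIB_eq_sSup, dIBValues_le_eq_empty hp hr₁, Real.sSup_empty]
    exact FdIB_nonneg hp r₂

end Curve

/-- For a discrete bottleneck variable `T` obeying `Y - X - T` with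
`H(T) = r`, every `r' ≥ r` is achieved by some discrete `T'` obeying `Y - X - T'` with
`H(T') = r'` and `I(Y;T') = I(Y;T)`.  Consequently the dIB curve `F_dIB` is monotonically
nondecreasing in `r`, and the inequality constraint `H(T) ≤ r` can be replaced by the
equality constraint `H(T) = r` without changing `F_dIB`. -/
theorem dIB_equality_constraint {X Y T : Type*} [Fintype X] [Fintype Y] [Fintype T]
    (p : X → Y → ℝ) (hp : IsJoint p)
    (κ : X → T → ℝ) (hκ : IsChannel κ) (r : ℝ)
    (hr : ent (margSnd (jointXT p κ)) = r) :
    (∀ r' ≥ r, ∃ (n : ℕ) (κ' : X → Fin n → ℝ), IsChannel κ' ∧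
        ent (margSnd (jointXT p κ')) = r' ∧
        mi (jointYT p κ') = mi (jointYT p κ)) ∧
    (∀ r₁ r₂ : ℝ, r₁ ≤ r₂ → FdIB p r₁ ≤ FdIB p r₂) ∧
    (∀ s : ℝ, FdIB p s = FdIBeq p s) := by
  refine ⟨fun r' hr' => exists_channel_ent_eq_mi_eq hp hκ (hr.trans_le hr'),
    fun _ _ h => FdIB_mono hp h, fun s => ?_⟩
  rw [FdIB_eq_sSup, FdIBeq_eq_sSup, dIBValues_le_eq_dIBValues_eq hp]
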